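/- arXiv:2008.00585 — 4 statements merged into one kernel-verified Lean document; each statement's English description precedes it below -/
import Mathlib

section
/- Let m, ℓ be coprime integers with ℓ odd and m ≠ 0. Define ε'_k = ⌊(|ℓ|(2k−1))/(2|m|)⌋ mod 2 for k ∈ ℤ. Then for all 1 ≤ k ≤ 2|m|, ε'_{2|m|+1−k} + ε'_k = 1. -/
/-- For coprime `m, ℓ` with `ℓ` odd, `m ≠ 0`, and
`ε'_k = ⌊|ℓ|(2k−1)/(2|m|)⌋ mod 2`, one has `ε'_{2|m|+1−k} + ε'_k = 1`
for all `1 ≤ k ≤ 2|m|`. -/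
theorem stmt_2 (m ℓ : ℤ) (hco : Int.gcd m ℓ = 1) (hodd : Odd ℓ) (hm : m ≠ 0) :
    ∀ k : ℤ, 1 ≤ k → k ≤ 2 * |m| →
      (⌊((|ℓ| : ℚ) * (2 * ((2 * |m| + 1 - k : ℤ) : ℚ) - 1)) / (2 * (|m| : ℚ))⌋ % 2)
      + (⌊((|ℓ| : ℚ) * (2 * (k : ℚ) - 1)) / (2 * (|m| : ℚ))⌋ % 2) = 1 := by
  intro k hk1 hk2
  simp only [← Int.cast_abs]
  have hM : (0:ℤ) < |m| := abs_pos.mpr hm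
  have haodd : Odd |ℓ| := by
    rcases abs_choice ℓ with h | h
    · rw [h]; exact hodd
    · rw [h]; exact hodd.neg
  have hanonneg : (0:ℤ) ≤ |ℓ| := abs_nonneg ℓ
  have ha1 : (1:ℤ) ≤ |ℓ| := by
    obtain ⟨s, hs⟩ := haodd; omega
  set a : ℤ := |ℓ| with ha
  set M : ℤ := |m| with hMdef
  have hMQ : (0:ℚ) < 2 * (M:ℚ) := by
    have : (0:ℚ) < (M:ℚ) := by exact_mod_cast hM
    linarith
  set x : ℚ := ((a:ℚ) * (2 * (k:ℚ) - 1)) / (2 * (M:ℚ)) with hx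
  set f : ℤ := ⌊x⌋ with hf
  -- x is not an integer
  have hne : (f:ℚ) ≠ x := by
    intro h
    have hq : ((a * (2 * k - 1) : ℤ) : ℚ) = ((f * (2 * M) : ℤ) : ℚ) := by
      push_cast
      rw [hx] at h
      field_simp at h
      linarith
    have hz : a * (2 * k - 1) = f * (2 * M) := by exact_mod_cast hq
    have hoddprod : Odd (a * (2 * k - 1)) := haodd.mul ⟨k - 1, by ring⟩
    have hevenprod : Even (f * (2 * M)) := ⟨f * M, by ring⟩
    rw [hz] at hoddprod
    exact (Int.not_odd_iff_even.mpr hevenprod) hoddprod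
  have hfle : (f:ℚ) ≤ x := Int.floor_le x
  have hflt : (f:ℚ) < x := lt_of_le_of_ne hfle hne
  have hxlt : x < (f:ℚ) + 1 := Int.lt_floor_add_one x
  have hxnn : (0:ℚ) ≤ x := by
    apply div_nonneg _ (le_of_lt hMQ)
    have h1 : (1:ℚ) ≤ (a:ℚ) := by exact_mod_cast ha1
    have h2 : (1:ℚ) ≤ (k:ℚ) := by exact_mod_cast hk1
    nlinarith
  have hf0 : 0 ≤ f := Int.floor_nonneg.mpr hxnn
  have hxub : x < 2 * (a:ℚ) := by
    rw [hx, div_lt_iff₀ hMQ]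
    have h2 : (k:ℚ) ≤ 2 * (M:ℚ) := by exact_mod_cast hk2
    have h1 : (1:ℚ) ≤ (a:ℚ) := by exact_mod_cast ha1
    nlinarith
  have hfub : f ≤ 2 * a - 1 := by
    have h1 := lt_of_le_of_lt hfle hxub
    have h2 : f < 2 * a := by exact_mod_cast h1
    omega
  have hnum : ((a:ℚ) * (2 * ((2 * M + 1 - k : ℤ) : ℚ) - 1)) / (2 * (M:ℚ))
      = 2 * (a:ℚ) - x := by
    rw [hx]
    push_cast
    field_simp
    ring
  have hfloor1 : ⌊((a:ℚ) * (2 * ((2 * M + 1 - k : ℤ) : ℚ) - 1)) / (2 * (M:ℚ))⌋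
      = 2 * a - 1 - f := by
    rw [hnum, Int.floor_eq_iff]
    constructor
    · push_cast; linarith
    · push_cast; linarith
  rw [hfloor1]
  omega
end

section
/- Let m, ℓ be coprime integers with ℓ odd, m ≠ 0, and define ε'_k = ⌊(|ℓ|(2k−1))/(2|m|)⌋ mod 2. Then the sequence (ε'_1, …, ε'_{|m|}) is palindromic: ε'_k = ε'_{|m|+1−k} for 1 ≤ k ≤ |m|. -/
/-- For coprime `m, ℓ` with `ℓ` odd and `m ≠ 0`, the sequence
`ε'_k = ⌊|ℓ|(2k−1)/(2|m|)⌋ mod 2` is palindromic on `1 ≤ k ≤ |m|`: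
`ε'_k = ε'_{|m|+1−k}`. -/
theorem stmt_3 (m ℓ : ℤ) (hco : Int.gcd m ℓ = 1) (hodd : Odd ℓ) (hm : m ≠ 0) :
    ∀ k : ℤ, 1 ≤ k → k ≤ |m| →
      (⌊((|ℓ| : ℚ) * (2 * (k : ℚ) - 1)) / (2 * (|m| : ℚ))⌋ % 2)
      = (⌊((|ℓ| : ℚ) * (2 * ((|m| + 1 - k : ℤ) : ℚ) - 1)) / (2 * (|m| : ℚ))⌋ % 2) := by
  intro k hk1 hk2
  simp only [← Int.cast_abs]
  set L : ℤ := |ℓ| with hL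
  set M : ℤ := |m| with hMdef
  have hM : (0:ℤ) < M := abs_pos.mpr hm
  have hMQ : (0:ℚ) < (M : ℚ) := by exact_mod_cast hM
  have hLodd : Odd L := by
    rcases abs_choice ℓ with h | h <;> rw [hL, h]
    · exact hodd
    · exact hodd.neg
  set x : ℚ := ((L : ℚ) * (2 * (k : ℚ) - 1)) / (2 * (M : ℚ)) with hx
  -- the reflected value equals L - x
  have key : ((L : ℚ) * (2 * ((M + 1 - k : ℤ) : ℚ) - 1)) / (2 * (M : ℚ))
      = (L : ℚ) - x := by
    rw [hx]
    push_cast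
    field_simp
    ring
  -- x is not an integer
  have hnotint : ∀ n : ℤ, x ≠ (n : ℚ) := by
    intro n hn
    have h2M : (2 * (M : ℚ)) ≠ 0 := by positivity
    rw [hx, div_eq_iff h2M] at hn
    have h3 : L * (2 * k - 1) = n * (2 * M) := by exact_mod_cast hn
    have hoddL : Odd (L * (2 * k - 1)) := hLodd.mul ⟨k - 1, by ring⟩
    rw [h3] at hoddL
    exact (Int.not_odd_iff_even.mpr ⟨n * M, by ring⟩) hoddL
  have hlt : (⌊x⌋ : ℚ) < x :=
    lt_of_le_of_ne (Int.floor_le x) fun h => hnotint ⌊x⌋ h.symm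
  have hub : x < ⌊x⌋ + 1 := Int.lt_floor_add_one x
  have hfloor : ⌊(L : ℚ) - x⌋ = L - ⌊x⌋ - 1 := by
    rw [Int.floor_eq_iff]
    constructor <;> push_cast <;> linarith
  rw [key, hfloor]
  obtain ⟨t, ht⟩ := hLodd
  omega
end

section
/- For each integer N ≥ 1, in PSL₂(ℤ) the element W_N := ((d b)^{N−1} d)·((p q)^{N−1} p) equals ±(1+(2N−1)², 2N−1; 2N−1, 1), equivalently σ₂^{2N−1}·σ₁^{1−2N} where σ₁ = ±(1,0;−1,1), σ₂ = ±(1,1;0,1). In particular its trace has absolute value 2+(2N−1)² > 2, so W_N is hyperbolic. -/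
/-- `SL(2,ℤ)`. -/
abbrev SL2Z := Matrix.SpecialLinearGroup (Fin 2) ℤ

/-- `PSL(2,ℤ) = SL(2,ℤ)/{±I}` realized as the quotient by the center. -/
abbrev PSL2Z := SL2Z ⧸ Subgroup.center SL2Z

/-- The image in `PSL(2,ℤ)` of an integer matrix of determinant 1. -/
def PSL2Z.mk (M : Matrix (Fin 2) (Fin 2) ℤ) (h : M.det = 1) : PSL2Z :=
  QuotientGroup.mk (⟨M, h⟩ : SL2Z)

private def dS : SL2Z := ⟨!![1, -1; 1, 0], by norm_num [Matrix.det_fin_two_of]⟩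
private def bS : SL2Z := ⟨!![0, 1; -1, -1], by norm_num [Matrix.det_fin_two_of]⟩
private def pS : SL2Z := ⟨!![1, 1; -1, 0], by norm_num [Matrix.det_fin_two_of]⟩
private def qS : SL2Z := ⟨!![0, -1; 1, -1], by norm_num [Matrix.det_fin_two_of]⟩
private def LS : SL2Z := ⟨!![1, 0; -1, 1], by norm_num [Matrix.det_fin_two_of]⟩
private def TS : SL2Z := ⟨!![1, 1; 0, 1], by norm_num [Matrix.det_fin_two_of]⟩

private lemma coe_LS_pow (m : ℕ) :
    ((LS ^ m : SL2Z) : Matrix (Fin 2) (Fin 2) ℤ) = !![1, 0; -(m:ℤ), 1] := by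
  induction m with
  | zero => simp [Matrix.one_fin_two]
  | succ n ih =>
      rw [pow_succ, Matrix.SpecialLinearGroup.coe_mul, ih,
        show (LS : Matrix (Fin 2) (Fin 2) ℤ) = !![1, 0; -1, 1] from rfl]
      ext i j
      fin_cases i <;> fin_cases j <;>
        simp [Matrix.mul_apply, Fin.sum_univ_two] <;> push_cast <;> ring

private lemma coe_TS_pow (m : ℕ) :
    ((TS ^ m : SL2Z) : Matrix (Fin 2) (Fin 2) ℤ) = !![1, (m:ℤ); 0, 1] := by
  induction m with
  | zero => simp [Matrix.one_fin_two]
  | succ n ih =>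
      rw [pow_succ, Matrix.SpecialLinearGroup.coe_mul, ih,
        show (TS : Matrix (Fin 2) (Fin 2) ℤ) = !![1, 1; 0, 1] from rfl]
      ext i j
      fin_cases i <;> fin_cases j <;>
        simp [Matrix.mul_apply, Fin.sum_univ_two] <;> push_cast <;> ring

private lemma coe_db_pow (m : ℕ) :
    (((dS * bS) ^ m : SL2Z) : Matrix (Fin 2) (Fin 2) ℤ) = !![1, 2*(m:ℤ); 0, 1] := by
  induction m with
  | zero => simp [Matrix.one_fin_two]
  | succ n ih =>
      rw [pow_succ, Matrix.SpecialLinearGroup.coe_mul, ih, Matrix.SpecialLinearGroup.coe_mul,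
        show (dS : Matrix (Fin 2) (Fin 2) ℤ) = !![1, -1; 1, 0] from rfl,
        show (bS : Matrix (Fin 2) (Fin 2) ℤ) = !![0, 1; -1, -1] from rfl]
      ext i j
      fin_cases i <;> fin_cases j <;>
        simp [Matrix.mul_apply, Fin.sum_univ_two] <;> push_cast <;> ring

private lemma coe_pq_pow (m : ℕ) :
    (((pS * qS) ^ m : SL2Z) : Matrix (Fin 2) (Fin 2) ℤ) = !![1, -2*(m:ℤ); 0, 1] := by
  induction m with
  | zero => simp [Matrix.one_fin_two]
  | succ n ih =>
      rw [pow_succ, Matrix.SpecialLinearGroup.coe_mul, ih, Matrix.SpecialLinearGroup.coe_mul,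
        show (pS : Matrix (Fin 2) (Fin 2) ℤ) = !![1, 1; -1, 0] from rfl,
        show (qS : Matrix (Fin 2) (Fin 2) ℤ) = !![0, -1; 1, -1] from rfl]
      ext i j
      fin_cases i <;> fin_cases j <;>
        simp [Matrix.mul_apply, Fin.sum_univ_two] <;> push_cast <;> ring

private lemma sl_main (N : ℕ) (hN : 1 ≤ N) :
    (((dS * bS) ^ (N - 1) * dS) * ((pS * qS) ^ (N - 1) * pS) : SL2Z)
      = ⟨!![1 + (2 * (N : ℤ) - 1) ^ 2, 2 * (N : ℤ) - 1; 2 * (N : ℤ) - 1, 1],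
          by simp [Matrix.det_fin_two_of]; ring⟩ := by
  apply Subtype.ext
  have hc : ((N : ℤ) - 1 : ℤ) = ((N - 1 : ℕ) : ℤ) := by omega
  simp only [Matrix.SpecialLinearGroup.coe_mul, coe_db_pow, coe_pq_pow,
    show (dS : Matrix (Fin 2) (Fin 2) ℤ) = !![1, -1; 1, 0] from rfl,
    show (pS : Matrix (Fin 2) (Fin 2) ℤ) = !![1, 1; -1, 0] from rfl]
  ext i j
  fin_cases i <;> fin_cases j <;>
    simp [Matrix.mul_apply, Fin.sum_univ_two, ← hc] <;> ring

private lemma sl_second (m : ℕ) (k : ℤ) (hk : (m : ℤ) = k) (A : SL2Z)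
    (hA : (A : Matrix (Fin 2) (Fin 2) ℤ) = !![1 + k ^ 2, k; k, 1]) :
    A * LS ^ m = TS ^ m := by
  subst hk
  apply Subtype.ext
  rw [Matrix.SpecialLinearGroup.coe_mul, hA]
  rw [coe_LS_pow, coe_TS_pow]
  ext i j
  fin_cases i <;> fin_cases j <;>
    simp [Matrix.mul_apply, Fin.sum_univ_two] <;> ring

/-- For each `N ≥ 1`, in `PSL₂(ℤ)` the element `W_N = ((d b)^{N−1} d)·((p q)^{N−1} p)`
equals `±(1+(2N−1)², 2N−1; 2N−1, 1) = σ₂^{2N−1}·σ₁^{1−2N}`; its trace has absolute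
value `2+(2N−1)² > 2`, so `W_N` is hyperbolic. -/
theorem stmt_10 (N : ℕ) (hN : 1 ≤ N) :
    let d : PSL2Z := PSL2Z.mk !![1, -1; 1, 0] (by norm_num [Matrix.det_fin_two_of])
    let b : PSL2Z := PSL2Z.mk !![0, 1; -1, -1] (by norm_num [Matrix.det_fin_two_of])
    let p : PSL2Z := PSL2Z.mk !![1, 1; -1, 0] (by norm_num [Matrix.det_fin_two_of])
    let q : PSL2Z := PSL2Z.mk !![0, -1; 1, -1] (by norm_num [Matrix.det_fin_two_of])
    let σ₁ : PSL2Z := PSL2Z.mk !![1, 0; -1, 1] (by norm_num [Matrix.det_fin_two_of])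
    let σ₂ : PSL2Z := PSL2Z.mk !![1, 1; 0, 1] (by norm_num [Matrix.det_fin_two_of])
    ((d * b) ^ (N - 1) * d) * ((p * q) ^ (N - 1) * p)
        = PSL2Z.mk !![1 + (2 * (N : ℤ) - 1) ^ 2, 2 * (N : ℤ) - 1; 2 * (N : ℤ) - 1, 1]
            (by simp [Matrix.det_fin_two_of]; ring) ∧
      ((d * b) ^ (N - 1) * d) * ((p * q) ^ (N - 1) * p)
        = σ₂ ^ (2 * (N : ℤ) - 1) * σ₁ ^ (1 - 2 * (N : ℤ)) ∧
      |Matrix.trace !![1 + (2 * (N : ℤ) - 1) ^ 2, 2 * (N : ℤ) - 1; 2 * (N : ℤ) - 1, 1]|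
          = 2 + (2 * (N : ℤ) - 1) ^ 2 ∧
      2 < |Matrix.trace !![1 + (2 * (N : ℤ) - 1) ^ 2, 2 * (N : ℤ) - 1; 2 * (N : ℤ) - 1, 1]| := by
  intro d b p q σ₁ σ₂
  set φ := QuotientGroup.mk' (Subgroup.center SL2Z) with hφ
  have hd : d = φ dS := rfl
  have hb : b = φ bS := rfl
  have hp : p = φ pS := rfl
  have hq : q = φ qS := rfl
  have hσ₁ : σ₁ = φ LS := rfl
  have hσ₂ : σ₂ = φ TS := rfl
  have hNZ : (1 : ℤ) ≤ (N : ℤ) := by exact_mod_cast hN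
  have hsq : 1 ≤ (2 * (N : ℤ) - 1) ^ 2 := by nlinarith
  have h1 : ((d * b) ^ (N - 1) * d) * ((p * q) ^ (N - 1) * p)
      = PSL2Z.mk !![1 + (2 * (N : ℤ) - 1) ^ 2, 2 * (N : ℤ) - 1; 2 * (N : ℤ) - 1, 1]
          (by simp [Matrix.det_fin_two_of]; ring) := by
    rw [hd, hb, hp, hq, ← map_mul φ dS bS, ← map_mul φ pS qS, ← map_pow, ← map_pow,
      ← map_mul, ← map_mul, ← map_mul]
    exact congrArg φ (sl_main N hN)
  refine ⟨h1, ?_, ?_, ?_⟩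
  · rw [h1]
    set m : ℕ := 2 * N - 1 with hm
    have hmk : ((m : ℤ)) = 2 * (N : ℤ) - 1 := by omega
    have e2 : (1 - 2 * (N : ℤ)) = -(m : ℤ) := by omega
    conv_rhs => rw [← hmk, e2]
    rw [zpow_natCast, zpow_neg, zpow_natCast, eq_mul_inv_iff_mul_eq,
      hσ₁, hσ₂, ← map_pow, ← map_pow]
    show φ _ * φ _ = φ _
    refine (map_mul φ _ _).symm.trans ?_
    exact congrArg φ (sl_second m _ hmk _ rfl)
  · rw [Matrix.trace_fin_two_of, abs_of_nonneg (by nlinarith)]; ring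
  · rw [Matrix.trace_fin_two_of, abs_of_nonneg (by nlinarith)]; nlinarith
end

section
/- Let m, ℓ be integers with gcd(m,ℓ) = 1 and 2|m|/3 ≤ |ℓ| < |m|. Define δ_k = ⌊(|ℓ|(2k+1))/(2|m|)⌋ − ⌊(|ℓ|(2k−1))/(2|m|)⌋ ∈ {0,1}. Then the symbol 0 is isolated: if δ_k = 0 for some k then δ_{k−1} = 1 and δ_{k+1} = 1. -/
lemma floor_add_lt_one' {x c : ℚ} (hc : c < 1) : ⌊x + c⌋ ≤ ⌊x⌋ + 1 := by
  have h1 := Int.lt_floor_add_one x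
  have h2 : x + c < ((⌊x⌋ + 2 : ℤ) : ℚ) := by push_cast; linarith
  have := Int.floor_lt.mpr h2
  omega

lemma floor_add_gt_one' {x c : ℚ} (hc : 1 < c) : ⌊x⌋ + 1 ≤ ⌊x + c⌋ := by
  apply Int.le_floor.mpr
  have := Int.floor_le x
  push_cast; linarith

/-- For integers `m, ℓ` with `gcd(m,ℓ) = 1` and `(2/3)|m| ≤ |ℓ| < |m|`, in the sequence
`δ_k = ⌊(|ℓ|(2k+1))/(2|m|)⌋ − ⌊(|ℓ|(2k−1))/(2|m|)⌋ ∈ {0,1}` the symbol `0` is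
isolated: if `δ_k = 0` then `δ_{k−1} = 1` and `δ_{k+1} = 1`. -/
theorem stmt_15 (m ℓ : ℤ) (hco : Int.gcd m ℓ = 1)
    (h0 : 2 * |m| ≤ 3 * |ℓ|) (h1 : |ℓ| < |m|) :
    ∀ k : ℤ,
      ⌊((|ℓ| : ℚ) * (2 * (k : ℚ) + 1)) / (2 * (|m| : ℚ))⌋
          - ⌊((|ℓ| : ℚ) * (2 * (k : ℚ) - 1)) / (2 * (|m| : ℚ))⌋ = 0 →
      (⌊((|ℓ| : ℚ) * (2 * ((k : ℚ) - 1) + 1)) / (2 * (|m| : ℚ))⌋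
          - ⌊((|ℓ| : ℚ) * (2 * ((k : ℚ) - 1) - 1)) / (2 * (|m| : ℚ))⌋ = 1 ∧
       ⌊((|ℓ| : ℚ) * (2 * ((k : ℚ) + 1) + 1)) / (2 * (|m| : ℚ))⌋
          - ⌊((|ℓ| : ℚ) * (2 * ((k : ℚ) + 1) - 1)) / (2 * (|m| : ℚ))⌋ = 1) := by
  intro k hk
  set a : ℚ := (|ℓ| : ℚ) with ha
  set b : ℚ := (|m| : ℚ) with hb
  have hbpos : (0:ℚ) < b := by
    have : (0:ℤ) < |m| := lt_of_le_of_lt (abs_nonneg ℓ) h1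
    rw [hb, ← Int.cast_abs]; exact_mod_cast this
  have hab : a < b := by
    rw [ha, hb, ← Int.cast_abs, ← Int.cast_abs]; exact_mod_cast h1
  have h2b3a : 2 * b ≤ 3 * a := by
    rw [ha, hb, ← Int.cast_abs, ← Int.cast_abs]; exact_mod_cast h0
  have hbne : b ≠ 0 := ne_of_gt hbpos
  have hstep1 : a / b < 1 := (div_lt_one hbpos).mpr hab
  have hstep2 : (1:ℚ) < 2 * (a / b) := by
    rw [show 2 * (a/b) = (2*a)/b by ring, lt_div_iff₀ hbpos]
    linarith
  set x : ℚ := a * (2 * (k:ℚ) - 1) / (2 * b) with hx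
  have e1 : a * (2 * (k:ℚ) + 1) / (2 * b) = x + a / b := by
    rw [hx]; field_simp; ring
  have e2 : a * (2 * ((k:ℚ) - 1) + 1) / (2 * b) = x := by
    rw [hx]; ring
  have e3 : a * (2 * ((k:ℚ) - 1) - 1) / (2 * b) = x - a / b := by
    rw [hx]; field_simp; ring
  have e4 : a * (2 * ((k:ℚ) + 1) + 1) / (2 * b) = (x + a / b) + a / b := by
    rw [hx]; field_simp; ring
  have e5 : a * (2 * ((k:ℚ) + 1) - 1) / (2 * b) = x + a / b := by
    rw [hx]; field_simp; ring
  rw [e1] at hk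
  rw [e2, e3, e4, e5]
  have key1 : ⌊(x - a / b) + a / b⌋ ≤ ⌊x - a / b⌋ + 1 := floor_add_lt_one' hstep1
  have key2 : ⌊x - a / b⌋ + 1 ≤ ⌊(x - a / b) + 2 * (a / b)⌋ := floor_add_gt_one' hstep2
  have key3 : ⌊x + a / b + a / b⌋ ≤ ⌊x + a / b⌋ + 1 := floor_add_lt_one' hstep1
  have key4 : ⌊x⌋ + 1 ≤ ⌊x + 2 * (a / b)⌋ := floor_add_gt_one' hstep2
  have eq1 : (x - a / b) + a / b = x := by ring
  have eq2 : (x - a / b) + 2 * (a / b) = x + a / b := by ring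
  have eq3 : (x + a / b) + a / b = x + a / b + a / b := by ring
  have eq4 : x + 2 * (a / b) = x + a / b + a / b := by ring
  rw [eq1] at key1
  rw [eq2] at key2
  rw [eq4] at key4
  omega
end
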